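/- arXiv:1904.02084 — 2 statements merged into one kernel-verified Lean document; each statement's English description precedes it below -/
import Mathlib

section
/- For a finitely supported function v : ℤ^n → ℝ, ∑_{z ∈ ℤ^n} (Δ v(z))² = ∑_{i=1}^{n} ∑_{j=1}^{n} ∑_{z ∈ ℤ^n} (D_i D_{-j} v(z))², where Δ v(z) = ∑_{i=1}^n (v(z+e_i) - 2v(z) + v(z-e_i)) is the discrete Laplacian. -/
/-!
Summation by parts says that on finitely supported functions the adjoint of the forward difference
`D_h` is `-D_{-h}`, and all difference operators commute. Hence
`⟨D_i D_{-i} v, D_j D_{-j} v⟩ = ⟨D_{-j} D_{-i} v, D_{-i} D_{-j} v⟩ = ‖D_{-i} D_{-j} v‖²`, and the shift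
`z ↦ z + e_i` turns `D_{-i}` into `D_i`. Expanding the square of `Δ v = ∑_i D_i D_{-i} v` gives the
identity.
-/

open Function fwdDiff

/-- The paper's `D_{-h}`; its `D_h` is Mathlib's `Δ_[h]`. -/
def bwdDiff {M G : Type*} [AddGroup M] [AddCommGroup G] (h : M) (f : M → G) : M → G :=
  fun z ↦ f z - f (z - h)

local notation "∇_[" h "]" => bwdDiff h

section Differences

variable {M G : Type*} [AddCommGroup M] [AddCommGroup G]

lemma bwdDiff_apply_add (h : M) (f : M → G) (z : M) : ∇_[h] f (z + h) = Δ_[h] f z := by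
  simp [bwdDiff, fwdDiff]

lemma fwdDiff_bwdDiff_comm (h k : M) (f : M → G) : Δ_[h] (∇_[k] f) = ∇_[k] (Δ_[h] f) := by
  funext z
  simp only [fwdDiff, bwdDiff, sub_add_eq_add_sub]
  abel

lemma bwdDiff_comm (h k : M) (f : M → G) : ∇_[h] (∇_[k] f) = ∇_[k] (∇_[h] f) := by
  funext z
  simp only [bwdDiff, sub_sub, add_comm k h]
  abel

lemma fwdDiff_bwdDiff_self_apply {R : Type*} [Ring R] (h : M) (f : M → R) (z : M) :
    Δ_[h] (∇_[h] f) z = f (z + h) - 2 * f z + f (z - h) := by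
  simp only [fwdDiff, bwdDiff, add_sub_cancel_right, two_mul]
  abel

lemma Function.HasFiniteSupport.bwdDiff {f : M → G} (hf : f.HasFiniteSupport) (h : M) :
    (∇_[h] f).HasFiniteSupport :=
  hf.sub (hf.comp_of_injective (sub_left_injective (b := h)))

lemma Function.HasFiniteSupport.fwdDiff {f : M → G} (hf : f.HasFiniteSupport) (h : M) :
    (Δ_[h] f).HasFiniteSupport :=
  (hf.comp_of_injective (add_left_injective h)).sub hf

end Differences

section SummationByParts

variable {M R : Type*} [AddCommGroup M] [CommRing R]

lemma finsum_comp_add_right (f : M → R) (h : M) : ∑ᶠ z, f (z + h) = ∑ᶠ z, f z :=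
  finsum_comp_equiv (Equiv.addRight h)

lemma finsum_fwdDiff_mul {F : M → R} (hF : F.HasFiniteSupport) (G : M → R) (h : M) :
    ∑ᶠ z, Δ_[h] F z * G z = -∑ᶠ z, F z * ∇_[h] G z := by
  have hFh : (fun z ↦ F (z + h)).HasFiniteSupport := hF.comp_of_injective (add_left_injective h)
  have hshift : ∑ᶠ z, F (z + h) * G z = ∑ᶠ z, F z * G (z - h) := by
    rw [← finsum_comp_add_right (fun z ↦ F z * G (z - h)) h]
    simp only [add_sub_cancel_right]
  simp only [fwdDiff, bwdDiff, sub_mul, mul_sub]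
  rw [finsum_sub_distrib (hFh.fun_mul_left G) (hF.fun_mul_left G),
    finsum_sub_distrib (hF.fun_mul_left G) (hF.fun_mul_left _), hshift, neg_sub]

lemma finsum_mul_fwdDiff (F : M → R) {G : M → R} (hG : G.HasFiniteSupport) (h : M) :
    ∑ᶠ z, F z * Δ_[h] G z = -∑ᶠ z, ∇_[h] F z * G z := by
  simp only [mul_comm (F _), mul_comm _ (G _)]
  exact finsum_fwdDiff_mul hG F h

lemma finsum_bwdDiff_sq (f : M → R) (h : M) :
    ∑ᶠ z, ∇_[h] f z ^ 2 = ∑ᶠ z, Δ_[h] f z ^ 2 := by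
  rw [← finsum_comp_add_right (fun z ↦ ∇_[h] f z ^ 2) h]
  simp only [bwdDiff_apply_add]

lemma finsum_fwdDiff_bwdDiff_mul_fwdDiff_bwdDiff {v : M → R} (hv : v.HasFiniteSupport) (e f : M) :
    ∑ᶠ z, Δ_[e] (∇_[e] v) z * Δ_[f] (∇_[f] v) z = ∑ᶠ z, Δ_[e] (∇_[f] v) z ^ 2 := by
  calc ∑ᶠ z, Δ_[e] (∇_[e] v) z * Δ_[f] (∇_[f] v) z
      = -∑ᶠ z, ∇_[e] v z * Δ_[f] (∇_[e] (∇_[f] v)) z := by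
        rw [finsum_fwdDiff_mul (hv.bwdDiff e), fwdDiff_bwdDiff_comm f e]
    _ = ∑ᶠ z, ∇_[f] (∇_[e] v) z * ∇_[e] (∇_[f] v) z := by
        rw [finsum_mul_fwdDiff _ ((hv.bwdDiff f).bwdDiff e), neg_neg]
    _ = ∑ᶠ z, Δ_[e] (∇_[f] v) z ^ 2 := by
        rw [bwdDiff_comm f e, ← finsum_bwdDiff_sq]
        simp only [sq]

end SummationByParts

lemma finsum_sq_finsetSum {α ι R : Type*} [CommRing R] (s : Finset ι) (f : ι → α → R)
    (hf : ∀ i, (f i).HasFiniteSupport) :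
    ∑ᶠ z, (∑ i ∈ s, f i z) ^ 2 = ∑ i ∈ s, ∑ j ∈ s, ∑ᶠ z, f i z * f j z := by
  simp only [sq, Finset.sum_mul_sum]
  rw [finsum_sum_comm _ _ fun i _ ↦ HasFiniteSupport.sum (fun j ↦ (hf i).fun_mul_left _) s]
  exact Finset.sum_congr rfl fun i _ ↦ finsum_sum_comm _ _ fun j _ ↦ (hf i).fun_mul_left _

/-- The L² norm of the discrete Laplacian equals the L² norm of the discrete Hessian. -/
theorem stmt2 (n : ℕ) (v : (Fin n → ℤ) → ℝ) (hv : (Function.support v).Finite) :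
    ∑ᶠ z : Fin n → ℤ,
        (∑ i : Fin n, (v (z + Pi.single i 1) - 2 * v z + v (z - Pi.single i 1))) ^ 2
      = ∑ i : Fin n, ∑ j : Fin n, ∑ᶠ z : Fin n → ℤ,
          ((v (z + Pi.single i 1) - v (z + Pi.single i 1 - Pi.single j 1))
            - (v z - v (z - Pi.single j 1))) ^ 2 := by
  have hv : v.HasFiniteSupport := hv
  simp only [← fwdDiff_bwdDiff_self_apply]
  rw [finsum_sq_finsetSum _ _ fun i ↦ (hv.bwdDiff _).fwdDiff _]
  simp only [finsum_fwdDiff_bwdDiff_mul_fwdDiff_bwdDiff hv]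
  rfl
end

section
/- Let f : ℝ → ℝ be twice continuously differentiable and θ_j the B-spline as above, j ≥ 2, with T^{h,j} f(x) = (1/h)∫ f(t)θ_j((x-t)/h) dt. Then the second central difference quotient of T^{h,j-2} f equals the mollified second derivative: (T^{h,j-2}f(x+h) - 2·T^{h,j-2}f(x) + T^{h,j-2}f(x-h))/h² = T^{h,j}(f'')(x) for all x ∈ ℝ, where T^{h,0} is understood as the identity when j = 2. -/
open MeasureTheory

/-!
Write `δu(x) = u(x + h/2) - u(x - h/2)`. Unfolding `θ_{k+1} = θ_k * θ_1` and Fubini give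
`T^{h,k+1} u(x) = ∫_{-1/2}^{1/2} T^{h,k} u(x - h s) ds`. For `k = 0` this and the fundamental
theorem of calculus give `δf = h T^{h,1} f'`; since `δ` commutes with the average over `s`,
induction gives `δ T^{h,k} f = h T^{h,k+1} f'` for every `k`. The second difference is `δ²`, so
`δ² T^{h,k} f = h δ T^{h,k+1} f' = h² T^{h,k+2} f''`.
-/

/-- The indicator function of [-1/2, 1/2]. -/
noncomputable def theta1 : ℝ → ℝ := fun x => if x ∈ Set.Icc (-(1/2) : ℝ) (1/2) then 1 else 0

/-- The centered B-spline of degree j-1: θ_1 = 1_{[-1/2,1/2]}, θ_{j+1} = θ_j * θ_1. -/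
noncomputable def theta : ℕ → ℝ → ℝ
  | 0 => fun _ => 0
  | 1 => theta1
  | j + 2 => fun x => ∫ t : ℝ, theta (j + 1) (x - t) * theta1 t

/-- The smoothing operator T^{h,j} f = (1/h) f * θ_j(·/h), with T^{h,0} = id. -/
noncomputable def Tsm (h : ℝ) (j : ℕ) (f : ℝ → ℝ) : ℝ → ℝ :=
  if j = 0 then f else fun x => (1 / h) * ∫ t : ℝ, f t * theta j ((x - t) / h)

lemma integrable_mul_of_support_subset {X : Type*} [MeasurableSpace X] [TopologicalSpace X]
    [OpensMeasurableSpace X] [T2Space X] {μ : Measure X} [IsFiniteMeasureOnCompacts μ]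
    {f φ : X → ℝ} {K : Set X} {C : ℝ} (hK : IsCompact K) (hf : ContinuousOn f K)
    (hφ : AEStronglyMeasurable φ μ) (hφC : ∀ x, ‖φ x‖ ≤ C) (hφK : Function.support φ ⊆ K) :
    Integrable (fun x => f x * φ x) μ :=
  ((Measure.integrableOn_of_bounded hK.measure_lt_top.ne hφ (ae_of_all _ hφC)).continuousOn_mul
    hf hK).integrable_of_forall_notMem_eq_zero fun x hx => by
      rw [Function.notMem_support.mp fun h => hx (hφK h), mul_zero]

lemma theta1_eq_indicator : theta1 = (Set.Icc (-(1/2) : ℝ) (1/2)).indicator 1 := by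
  funext x
  simp [theta1, Set.indicator_apply]

lemma measurable_theta1 : Measurable theta1 := by
  rw [theta1_eq_indicator]
  exact measurable_one.indicator measurableSet_Icc

lemma integrable_theta1 : Integrable theta1 := by
  rw [theta1_eq_indicator]
  exact (integrableOn_const (by simp)).integrable_indicator measurableSet_Icc

lemma integral_mul_theta1 (g : ℝ → ℝ) :
    ∫ t, g t * theta1 t = ∫ t in (-(1/2))..(1/2), g t := by
  rw [intervalIntegral.integral_of_le (by norm_num), ← integral_Icc_eq_integral_Ioc,
    ← integral_indicator measurableSet_Icc]
  congr 1 with t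
  simp [theta1_eq_indicator, Set.indicator_apply]

lemma integral_theta1 : ∫ t, theta1 t = 1 := by
  have h := integral_mul_theta1 fun _ => 1
  norm_num at h
  exact h

lemma theta_add_two (k : ℕ) (y : ℝ) :
    theta (k + 2) y = ∫ t, theta (k + 1) (y - t) * theta1 t := rfl

lemma measurable_theta : ∀ k, Measurable (theta k)
  | 0 => measurable_const
  | 1 => measurable_theta1
  | k + 2 => by
    have h : StronglyMeasurable fun p : ℝ × ℝ => theta (k + 1) (p.1 - p.2) * theta1 p.2 :=
      ((measurable_theta (k + 1)).comp (measurable_fst.sub measurable_snd)).mul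
        (measurable_theta1.comp measurable_snd) |>.stronglyMeasurable
    exact h.integral_prod_right'.measurable

lemma theta1_nonneg (y : ℝ) : 0 ≤ theta1 y := by
  unfold theta1; split_ifs <;> norm_num

lemma norm_theta1_le_one (y : ℝ) : ‖theta1 y‖ ≤ 1 := by
  unfold theta1; split_ifs <;> norm_num

lemma norm_theta_le_one : ∀ k y, ‖theta k y‖ ≤ 1
  | 0, _ => by simp [theta]
  | 1, y => norm_theta1_le_one y
  | k + 2, y => by
    rw [theta_add_two, ← integral_theta1]
    refine norm_integral_le_of_norm_le integrable_theta1 (ae_of_all _ fun t => ?_)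
    rw [norm_mul]
    calc ‖theta (k + 1) (y - t)‖ * ‖theta1 t‖ ≤ 1 * ‖theta1 t‖ := by
          gcongr; exact norm_theta_le_one (k + 1) (y - t)
      _ = theta1 t := by rw [one_mul, Real.norm_of_nonneg (theta1_nonneg t)]

lemma abs_le_of_theta1_ne_zero {y : ℝ} (hy : theta1 y ≠ 0) : |y| ≤ 1 / 2 := by
  by_contra h
  exact hy (if_neg fun hmem => h (abs_le.mpr hmem))

lemma abs_le_of_theta_ne_zero : ∀ {k : ℕ} {y : ℝ}, theta k y ≠ 0 → |y| ≤ k / 2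
  | 0, _, hy => absurd rfl hy
  | 1, _, hy => by simpa using abs_le_of_theta1_ne_zero hy
  | k + 2, y, hy => by
    obtain ⟨t, ht⟩ : ∃ t, theta (k + 1) (y - t) * theta1 t ≠ 0 := by
      by_contra! h
      exact hy (by rw [theta_add_two]; simp [h])
    have h1 := abs_le_of_theta_ne_zero (left_ne_zero_of_mul ht)
    have h2 := abs_le_of_theta1_ne_zero (right_ne_zero_of_mul ht)
    push_cast at h1 ⊢
    linarith [abs_sub_abs_le_abs_sub y t]

section Smoothing

variable {h : ℝ} {f : ℝ → ℝ}

@[simp]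
lemma Tsm_zero : Tsm h 0 f = f := if_pos rfl

lemma Tsm_eq_integral_comp (hh : 0 < h) {k : ℕ} (hk : k ≠ 0) (x : ℝ) :
    Tsm h k f x = ∫ u, f (x - h * u) * theta k u := by
  set F : ℝ → ℝ := fun t => f t * theta k ((x - t) / h)
  have hsubst : ∫ u, F (x - h * u) = h⁻¹ * ∫ t, F t := by
    rw [Measure.integral_comp_mul_left (fun v => F (x - v)), integral_sub_left_eq_self,
      abs_of_pos (inv_pos.mpr hh), smul_eq_mul]
  have hF : ∀ u, F (x - h * u) = f (x - h * u) * theta k u := fun u => by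
    simp only [F, sub_sub_cancel, mul_div_cancel_left₀ u hh.ne']
  simp only [Tsm, hk, if_false, ← hF, hsubst, one_div, F]

lemma integrable_comp_mul_theta_mul_theta1 (hf : Continuous f) (k : ℕ) (x : ℝ) :
    Integrable fun p : ℝ × ℝ => f (x - h * p.1) * (theta k (p.1 - p.2) * theta1 p.2) := by
  refine integrable_mul_of_support_subset (C := 1)
    ((isCompact_Icc (a := -((k + 1) / 2 : ℝ)) (b := (k + 1) / 2)).prod
      (isCompact_Icc (a := -(1 / 2 : ℝ)) (b := 1 / 2)))
    (by fun_prop) ?_ (fun p => ?_) (fun p hp => ?_)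
  · exact (((measurable_theta k).comp (measurable_fst.sub measurable_snd)).mul
      (measurable_theta1.comp measurable_snd)).aestronglyMeasurable
  · rw [norm_mul, ← one_mul 1]
    exact mul_le_mul (norm_theta_le_one k _) (norm_theta1_le_one _) (norm_nonneg _) zero_le_one
  · have h1 := abs_le_of_theta_ne_zero (left_ne_zero_of_mul hp)
    have h2 := abs_le_of_theta1_ne_zero (right_ne_zero_of_mul hp)
    have h3 := abs_sub_abs_le_abs_sub p.1 p.2
    exact ⟨abs_le.mp (by linarith), abs_le.mp h2⟩

lemma Tsm_succ_eq_intervalIntegral (hh : 0 < h) (hf : Continuous f) (k : ℕ) (x : ℝ) :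
    Tsm h (k + 1) f x = ∫ s in (-(1/2))..(1/2), Tsm h k f (x - h * s) := by
  rw [Tsm_eq_integral_comp hh k.succ_ne_zero, ← integral_mul_theta1]
  rcases k with _ | m
  · rfl
  calc ∫ u, f (x - h * u) * theta (m + 2) u
      = ∫ u, ∫ s, f (x - h * u) * (theta (m + 1) (u - s) * theta1 s) := by
        simp only [theta_add_two, integral_const_mul]
    _ = ∫ s, ∫ u, f (x - h * u) * (theta (m + 1) (u - s) * theta1 s) :=
        integral_integral_swap (integrable_comp_mul_theta_mul_theta1 hf (m + 1) x)
    _ = ∫ s, Tsm h (m + 1) f (x - h * s) * theta1 s := by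
        congr 1 with s
        rw [Tsm_eq_integral_comp hh m.succ_ne_zero, ← integral_mul_const,
          ← integral_add_right_eq_self _ s]
        congr 1 with v
        rw [add_sub_cancel_right, show x - h * (v + s) = x - h * s - h * v by ring, mul_assoc]

lemma continuous_Tsm (hh : 0 < h) (hf : Continuous f) : ∀ k, Continuous (Tsm h k f)
  | 0 => by simpa using hf
  | k + 1 => by
    rw [funext (Tsm_succ_eq_intervalIntegral hh hf k)]
    exact intervalIntegral.continuous_parametric_intervalIntegral_of_continuous'
      (f := fun x s => Tsm h k f (x - h * s))
      ((continuous_Tsm hh hf k).comp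
        (by fun_prop : Continuous fun p : ℝ × ℝ => p.1 - h * p.2)) _ _

lemma sub_eq_mul_Tsm_one_deriv (hh : 0 < h) (hf : ContDiff ℝ 1 f) (x : ℝ) :
    f (x + h / 2) - f (x - h / 2) = h * Tsm h 1 (deriv f) x := by
  rw [Tsm_succ_eq_intervalIntegral hh (hf.continuous_deriv le_rfl), Tsm_zero,
    intervalIntegral.integral_comp_sub_mul _ hh.ne',
    intervalIntegral.integral_deriv_eq_sub' f rfl
      (fun y _ => (hf.differentiable one_ne_zero).differentiableAt)
      (hf.continuous_deriv le_rfl).continuousOn,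
    smul_eq_mul, mul_inv_cancel_left₀ hh.ne']
  ring_nf

lemma Tsm_add_half_sub_Tsm_sub_half (hh : 0 < h) (hf : ContDiff ℝ 1 f) :
    ∀ (k : ℕ) (x : ℝ),
      Tsm h k f (x + h / 2) - Tsm h k f (x - h / 2) = h * Tsm h (k + 1) (deriv f) x
  | 0, x => by simpa using sub_eq_mul_Tsm_one_deriv hh hf x
  | k + 1, x => by
    have hTsm := continuous_Tsm hh hf.continuous k
    rw [Tsm_succ_eq_intervalIntegral hh hf.continuous,
      Tsm_succ_eq_intervalIntegral hh hf.continuous,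
      Tsm_succ_eq_intervalIntegral hh (hf.continuous_deriv le_rfl) (k + 1),
      ← intervalIntegral.integral_sub (Continuous.intervalIntegrable (by fun_prop) _ _)
        (Continuous.intervalIntegrable (by fun_prop) _ _),
      ← intervalIntegral.integral_const_mul]
    congr 1 with s
    rw [← Tsm_add_half_sub_Tsm_sub_half hh hf k (x - h * s)]
    ring_nf

end Smoothing

/-- The second central difference quotient of T^{h,j-2} f equals T^{h,j} f''. -/
theorem stmt19 (j : ℕ) (hj : 2 ≤ j) (h : ℝ) (hh : 0 < h) (f : ℝ → ℝ)
    (hf : ContDiff ℝ 2 f) (x : ℝ) :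
    (Tsm h (j-2) f (x + h) - 2 * Tsm h (j-2) f x + Tsm h (j-2) f (x - h)) / h ^ 2
      = Tsm h j (deriv (deriv f)) x := by
  obtain ⟨k, rfl⟩ : ∃ k, j = k + 2 := ⟨j - 2, by omega⟩
  have hf' : ContDiff ℝ 1 (deriv f) := (contDiff_succ_iff_deriv.mp hf).2.2
  have hfirst := Tsm_add_half_sub_Tsm_sub_half hh (hf.of_le one_le_two) k
  have hsecond := Tsm_add_half_sub_Tsm_sub_half hh hf' (k + 1) x
  have hright := hfirst (x + h / 2)
  have hleft := hfirst (x - h / 2)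
  rw [add_assoc, add_halves, add_sub_cancel_right] at hright
  rw [sub_add_cancel, sub_sub, add_halves] at hleft
  rw [Nat.add_sub_cancel, div_eq_iff (by positivity)]
  linear_combination hright - hleft + h * hsecond
end
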